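/- Let ρ0, ρ1 be positive definite density matrices on ℂ^D. Then for every positive definite D×D matrix G, Re tr(ρ0 G) · Re tr(ρ1 G^{-1}) ≥ (tr √(ρ1^{1/2} ρ0 ρ1^{1/2}))², and there exists a positive definite G achieving equality. Hence the quantum fidelity satisfies F(ρ0, ρ1) = √( min over positive definite G of tr(ρ0 G) tr(ρ1 G^{-1}) ). -/

import Mathlib

/-!
Write `R = ρ₁^{1/2}` and `S = (R ρ₀ R)^{1/2}`. The matrix `A = R⁻¹ S` satisfies `A Aᴴ = ρ₀` and
`Aᴴ R = S`, so the Cauchy–Schwarz inequality for the inner product `(X, Y) ↦ tr (Xᴴ G Y)`, applied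
to `A` and `G⁻¹ R`, gives `|tr S|² ≤ tr (ρ₀ G) tr (ρ₁ G⁻¹)`. For `G = R S⁻¹ R` both factors
equal `tr S`.
-/

open Matrix
open scoped ComplexOrder

/-- The positive semidefinite square root of a positive semidefinite matrix
(Mathlib's former `Matrix.PosSemidef.sqrt`, removed since; restated with its old definition). -/
noncomputable def Matrix.PosSemidef.sqrt {n : Type*} [Fintype n] [DecidableEq n]
    {A : Matrix n n ℂ} (hA : A.PosSemidef) : Matrix n n ℂ :=
  hA.1.eigenvectorUnitary.1 * diagonal ((↑) ∘ (√·) ∘ hA.1.eigenvalues) *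
  (star hA.1.eigenvectorUnitary : Matrix n n ℂ)

lemma Matrix.PosSemidef.posSemidef_sqrt {n : Type*} [Fintype n] [DecidableEq n]
    {A : Matrix n n ℂ} (hA : A.PosSemidef) : hA.sqrt.PosSemidef := by
  have hd : (diagonal ((↑) ∘ (√·) ∘ hA.1.eigenvalues : n → ℂ)).PosSemidef := by
    rw [posSemidef_diagonal_iff]
    intro i
    simp only [Function.comp_apply, Complex.zero_le_real]
    exact Real.sqrt_nonneg _
  have h := hd.mul_mul_conjTranspose_same (hA.1.eigenvectorUnitary : Matrix n n ℂ)
  unfold Matrix.PosSemidef.sqrt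
  simpa [Unitary.coe_star, Matrix.star_eq_conjTranspose] using h

/-- The sandwiched matrix `ρ1^{1/2} ρ0 ρ1^{1/2}` is positive semidefinite. -/
noncomputable def sandwichPosSemidef {D : ℕ} {ρ0 ρ1 : Matrix (Fin D) (Fin D) ℂ}
    (hρ0 : ρ0.PosSemidef) (hρ1 : ρ1.PosSemidef) :
    (hρ1.sqrt * ρ0 * hρ1.sqrt).PosSemidef := by
  have h := hρ0.mul_mul_conjTranspose_same hρ1.sqrt
  rwa [hρ1.posSemidef_sqrt.isHermitian.eq] at h

namespace Matrix

section sqrt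

variable {n : Type*} [Fintype n] [DecidableEq n] {A : Matrix n n ℂ}

open scoped MatrixOrder

lemma PosSemidef.sqrt_eq_cfcSqrt (hA : A.PosSemidef) : hA.sqrt = CFC.sqrt A := by
  rw [CFC.sqrt_eq_real_sqrt A hA.nonneg, cfcₙ_eq_cfc (hf0 := by simp), hA.1.cfc_eq,
    IsHermitian.cfc, Unitary.conjStarAlgAut_apply]
  rfl

lemma PosSemidef.sqrt_mul_sqrt (hA : A.PosSemidef) : hA.sqrt * hA.sqrt = A := by
  rw [hA.sqrt_eq_cfcSqrt, CFC.sqrt_mul_sqrt_self A hA.nonneg]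

lemma PosSemidef.isUnit_sqrt (hA : A.PosSemidef) (hu : IsUnit A) : IsUnit hA.sqrt := by
  rw [hA.sqrt_eq_cfcSqrt]
  exact (CFC.isUnit_sqrt_iff A hA.nonneg).mpr hu

end sqrt

section CauchySchwarz

variable {m n : Type*} [Fintype m] [Fintype n]

lemma trace_conjTranspose_mul_eq_inner (A B : Matrix m n ℂ) :
    (Aᴴ * B).trace = inner ℂ (WithLp.toLp 2 (Function.uncurry A))
      (WithLp.toLp 2 (Function.uncurry B) : EuclideanSpace ℂ (m × n)) := by
  simp only [trace, diag_apply, mul_apply, conjTranspose_apply, PiLp.inner_apply,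
    RCLike.inner_apply, Fintype.sum_prod_type]
  rw [Finset.sum_comm]
  simp only [mul_comm]
  rfl

lemma norm_trace_conjTranspose_mul_sq_le (A B : Matrix m n ℂ) :
    ‖(Aᴴ * B).trace‖ ^ 2 ≤ (Aᴴ * A).trace.re * (Bᴴ * B).trace.re := by
  simp only [trace_conjTranspose_mul_eq_inner, ← RCLike.re_to_complex, inner_self_eq_norm_sq,
    ← mul_pow]
  exact pow_le_pow_left₀ (norm_nonneg _) (norm_inner_le_norm _ _) 2

lemma PosDef.norm_trace_conjTranspose_mul_sq_le [DecidableEq n] {G : Matrix n n ℂ}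
    (hG : G.PosDef) (A B : Matrix n m ℂ) :
    ‖(Aᴴ * B).trace‖ ^ 2 ≤ (A * Aᴴ * G).trace.re * (B * Bᴴ * G⁻¹).trace.re := by
  set g := hG.posSemidef.sqrt
  have hg : gᴴ = g := hG.posSemidef.posSemidef_sqrt.isHermitian
  have hgg : g * g = G := hG.posSemidef.sqrt_mul_sqrt
  have hgu : IsUnit g.det := (isUnit_iff_isUnit_det g).mp (hG.posSemidef.isUnit_sqrt hG.isUnit)
  -- `tr (Aᴴ B) = tr ((g A)ᴴ (g⁻¹ B))` for the square root `g` of `G`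
  have key := Matrix.norm_trace_conjTranspose_mul_sq_le (g * A) (g⁻¹ * B)
  rw [conjTranspose_mul, conjTranspose_mul, conjTranspose_nonsing_inv, hg, Matrix.mul_assoc,
    mul_nonsing_inv_cancel_left (A := g) B hgu] at key
  refine key.trans_eq ?_
  congr 2
  · rw [← hgg, trace_mul_comm (A * Aᴴ), Matrix.mul_assoc, trace_mul_comm Aᴴ]
    simp only [Matrix.mul_assoc]
  · rw [← hgg, Matrix.mul_inv_rev, trace_mul_comm (B * Bᴴ), Matrix.mul_assoc, trace_mul_comm Bᴴ]
    simp only [Matrix.mul_assoc]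

end CauchySchwarz

section Sandwich

variable {n : Type*} [Fintype n] [DecidableEq n] {ρ₀ ρ₁ R S : Matrix n n ℂ}

lemma sq_re_trace_le_of_mul_self_eq_sandwich (hRu : IsUnit R.det) (hRH : Rᴴ = R)
    (hRR : R * R = ρ₁) (hSH : Sᴴ = S) (hSS : S * S = R * ρ₀ * R) {G : Matrix n n ℂ}
    (hG : G.PosDef) : S.trace.re ^ 2 ≤ (ρ₀ * G).trace.re * (ρ₁ * G⁻¹).trace.re := by
  have hA : (R⁻¹ * S)ᴴ * R = S := by
    rw [conjTranspose_mul, conjTranspose_nonsing_inv, hRH, hSH, Matrix.mul_assoc,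
      nonsing_inv_mul _ hRu, Matrix.mul_one]
  have hAA : R⁻¹ * S * (R⁻¹ * S)ᴴ = ρ₀ := by
    rw [conjTranspose_mul, conjTranspose_nonsing_inv, hRH, hSH, Matrix.mul_assoc,
      ← Matrix.mul_assoc S, hSS]
    simp only [Matrix.mul_assoc, nonsing_inv_mul_cancel_left _ _ hRu, mul_nonsing_inv _ hRu,
      Matrix.mul_one]
  have key := hG.norm_trace_conjTranspose_mul_sq_le (R⁻¹ * S) R
  rw [hA, hAA, hRH, hRR] at key
  calc S.trace.re ^ 2 ≤ ‖S.trace‖ ^ 2 := by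
        rw [sq, ← Complex.normSq_eq_norm_sq]
        exact Complex.re_sq_le_normSq _
    _ ≤ _ := key

lemma trace_mul_conj_inv_eq_trace (hSu : IsUnit S.det) (hSS : S * S = R * ρ₀ * R) :
    (ρ₀ * (R * S⁻¹ * R)).trace = S.trace := by
  rw [← Matrix.mul_assoc, trace_mul_comm, ← Matrix.mul_assoc, ← Matrix.mul_assoc, ← hSS,
    mul_nonsing_inv_cancel_right _ _ hSu]

lemma trace_mul_inv_conj_inv_eq_trace (hRu : IsUnit R.det) (hSu : IsUnit S.det)
    (hRR : R * R = ρ₁) : (ρ₁ * (R * S⁻¹ * R)⁻¹).trace = S.trace := by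
  rw [Matrix.mul_inv_rev, Matrix.mul_inv_rev, nonsing_inv_nonsing_inv _ hSu, ← hRR]
  simp only [Matrix.mul_assoc, mul_nonsing_inv_cancel_left _ _ hRu]
  rw [trace_mul_comm, Matrix.mul_assoc, nonsing_inv_mul _ hRu, Matrix.mul_one]

end Sandwich

end Matrix

theorem fidelity_sq_eq_min_trace_G_general {D : ℕ} (ρ0 ρ1 : Matrix (Fin D) (Fin D) ℂ)
    (hρ0 : ρ0.PosDef) (hρ1 : ρ1.PosDef) :
    (∀ G : Matrix (Fin D) (Fin D) ℂ, G.PosDef →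
        (((sandwichPosSemidef hρ0.posSemidef hρ1.posSemidef).sqrt).trace.re) ^ 2
          ≤ ((ρ0 * G).trace).re * ((ρ1 * G⁻¹).trace).re) ∧
    (∃ G : Matrix (Fin D) (Fin D) ℂ, G.PosDef ∧
        ((ρ0 * G).trace).re * ((ρ1 * G⁻¹).trace).re
          = (((sandwichPosSemidef hρ0.posSemidef hρ1.posSemidef).sqrt).trace.re) ^ 2) := by
  have hσ := sandwichPosSemidef hρ0.posSemidef hρ1.posSemidef
  set R := hρ1.posSemidef.sqrt
  set S := hσ.sqrt
  have hRH : Rᴴ = R := hρ1.posSemidef.posSemidef_sqrt.isHermitian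
  have hRR : R * R = ρ1 := hρ1.posSemidef.sqrt_mul_sqrt
  have hRu : IsUnit R := hρ1.posSemidef.isUnit_sqrt hρ1.isUnit
  have hS : S.PosDef := hσ.posSemidef_sqrt.posDef_iff_isUnit.mpr
    (hσ.isUnit_sqrt ((hRu.mul hρ0.isUnit).mul hRu))
  have hRd := (isUnit_iff_isUnit_det R).mp hRu
  have hSd := (isUnit_iff_isUnit_det S).mp hS.isUnit
  refine ⟨fun G hG => sq_re_trace_le_of_mul_self_eq_sandwich hRd hRH hRR hS.isHermitian
    hσ.sqrt_mul_sqrt hG, R * S⁻¹ * R, ?_, ?_⟩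
  · simpa only [hRH] using hS.inv.conjTranspose_mul_mul_same (mulVec_injective_iff_isUnit.mpr hRu)
  · rw [trace_mul_conj_inv_eq_trace hSd hσ.sqrt_mul_sqrt,
      trace_mul_inv_conj_inv_eq_trace hRd hSd hRR, sq]

/-- For positive definite density matrices `ρ0, ρ1`, every positive definite `G` satisfies
`tr(ρ0 G) tr(ρ1 G⁻¹) ≥ F(ρ0,ρ1)²`, and some positive definite `G` achieves equality;
hence `F(ρ0,ρ1)² = min_G tr(ρ0 G) tr(ρ1 G⁻¹)`. -/
theorem fidelity_sq_eq_min_trace_G {D : ℕ} (ρ0 ρ1 : Matrix (Fin D) (Fin D) ℂ)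
    (hρ0 : ρ0.PosDef) (hρ1 : ρ1.PosDef)
    (hρ0t : ρ0.trace = 1) (hρ1t : ρ1.trace = 1) :
    (∀ G : Matrix (Fin D) (Fin D) ℂ, G.PosDef →
        (((sandwichPosSemidef hρ0.posSemidef hρ1.posSemidef).sqrt).trace.re) ^ 2
          ≤ ((ρ0 * G).trace).re * ((ρ1 * G⁻¹).trace).re) ∧
    (∃ G : Matrix (Fin D) (Fin D) ℂ, G.PosDef ∧
        ((ρ0 * G).trace).re * ((ρ1 * G⁻¹).trace).re
          = (((sandwichPosSemidef hρ0.posSemidef hρ1.posSemidef).sqrt).trace.re) ^ 2) :=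
  fidelity_sq_eq_min_trace_G_general ρ0 ρ1 hρ0 hρ1
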